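/- With h_z and g_z defined as above for 0 < λ < 1, l ≥ 0, n ≥ l+1, the slope ratio (h_{z+1} - h_z)/(g_{z+1} - g_z) is strictly increasing in z for l ≤ z ≤ n. Equivalently, (h_{z+1}-h_z)/(g_{z+1}-g_z) - 1 = (z Δ_{z-1,l} - B_{z,l})/((n-z) Δ_{z,l} + B_{z,l}) where Δ_{z,l} = B_{z,l}(ν) - B_{z+1,l}(ν), and this expression is strictly increasing in z. -/

import Mathlib

/-- Binomial CDF: `B z l p = ∑_{j=0}^{l} C(z,j) p^j (1-p)^{z-j}`. -/
noncomputable def binCDF (z l : ℕ) (p : ℝ) : ℝ :=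
  ∑ j ∈ Finset.range (l + 1), (z.choose j : ℝ) * p ^ j * (1 - p) ^ (z - j)

/-- `h_z(l,n,λ)`. -/
noncomputable def hFun (l n z : ℕ) (lam : ℝ) : ℝ :=
  if z ≤ l then 1
  else (((n : ℝ) - z + 1) * binCDF z l (1 - lam)
        + (z : ℝ) * binCDF (z - 1) l (1 - lam)) / ((n : ℝ) + 1)

/-- `g_z(l,n,λ)`. -/
noncomputable def gFun (l n z : ℕ) (lam : ℝ) : ℝ :=
  if z ≤ l then ((n : ℝ) - z + 1) / ((n : ℝ) + 1)
  else ((n : ℝ) - z + 1) * binCDF z l (1 - lam) / ((n : ℝ) + 1)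

/-- `Δ_{z,l} = B_{z,l}(ν) - B_{z+1,l}(ν)`. -/
noncomputable def Delta (z l : ℕ) (lam : ℝ) : ℝ :=
  binCDF z l (1 - lam) - binCDF (z + 1) l (1 - lam)

/-- The slope ratio `(h_{z+1}-h_z)/(g_{z+1}-g_z)`. -/
noncomputable def slopeRatio (l n z : ℕ) (lam : ℝ) : ℝ :=
  (hFun l n (z + 1) lam - hFun l n z lam) / (gFun l n (z + 1) lam - gFun l n z lam)

/-!
Write `B_z = binCDF z l ν` and `Δ_z = B_z - B_{z+1} = C(z,l) ν^(l+1) λ^(z-l)`. Both increments are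
explicit: `h_{z+1} - h_z = -((n-z) Δ_z + z Δ_{z-1}) / (n+1)` and
`g_{z+1} - g_z = -((n-z) Δ_z + B_z) / (n+1)`, so the slope ratio minus one is
`(z Δ_{z-1} - B_z) / ((n-z) Δ_z + B_z)`. The closed form of `Δ` gives `λ z Δ_{z-1} = (z-l) Δ_z`, and
comparing the binomial sums term by term gives `Δ_z B_{z+1} ≤ Δ_{z+1} B_z`. With `c = z - l` and
`m = n - z`, `λ` times the cross-multiplied difference of two consecutive ratios is then
`(m+c) Δ_z Δ_{z+1} + (c + λ m) (Δ_{z+1} B_z - Δ_z B_{z+1}) + (1-λ) Δ_{z+1} B_z > 0`.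
-/

open Finset

theorem binCDF_of_le {z l : ℕ} (p : ℝ) (h : z ≤ l) : binCDF z l p = 1 := by
  have hvanish : ∀ j ∈ range (l + 1), j ∉ range (z + 1) →
      (z.choose j : ℝ) * p ^ j * (1 - p) ^ (z - j) = 0 := by
    intro j _ hj
    rw [Nat.choose_eq_zero_of_lt (by simpa using hj), Nat.cast_zero, zero_mul, zero_mul]
  rw [binCDF, ← sum_subset (range_subset_range.mpr (by omega)) hvanish]
  have hbinom := add_pow p (1 - p) z
  rw [add_sub_cancel, one_pow] at hbinom
  exact (sum_congr rfl fun j _ => by ring).trans hbinom.symm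

theorem binCDF_pos {p : ℝ} (hp₀ : 0 ≤ p) (hp₁ : p < 1) (z l : ℕ) : 0 < binCDF z l p := by
  have hq : 0 < 1 - p := by linarith
  exact sum_pos' (fun j _ => by positivity) ⟨0, by simp, by simpa using pow_pos hq z⟩

theorem binCDF_sub_binCDF_succ (z l : ℕ) (p : ℝ) :
    binCDF z l p - binCDF (z + 1) l p = (z.choose l : ℝ) * p ^ (l + 1) * (1 - p) ^ (z - l) := by
  induction l with
  | zero =>
    simp only [binCDF, zero_add, range_one, sum_singleton, Nat.choose_zero_right, Nat.cast_one,
      pow_zero, one_mul, mul_one, tsub_zero, pow_one]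
    ring
  | succ l ih =>
    have hsucc (w : ℕ) : binCDF w (l + 1) p
        = binCDF w l p + (w.choose (l + 1) : ℝ) * p ^ (l + 1) * (1 - p) ^ (w - (l + 1)) :=
      sum_range_succ _ _
    rw [hsucc, hsucc, Nat.choose_succ_succ', Nat.add_sub_add_right, Nat.cast_add]
    rcases lt_or_ge l z with hlz | hzl
    · obtain ⟨k, hk⟩ : ∃ k, z - l = k + 1 := ⟨z - l - 1, by omega⟩
      rw [hk] at ih
      rw [show z - (l + 1) = k by omega, hk, pow_succ]
      linear_combination ih
    · rw [Nat.choose_eq_zero_of_lt (by omega : z < l + 1)]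
      linear_combination ih

theorem Delta_eq_choose_mul (z l : ℕ) (lam : ℝ) :
    Delta z l lam = (z.choose l : ℝ) * (1 - lam) ^ (l + 1) * lam ^ (z - l) := by
  rw [Delta, binCDF_sub_binCDF_succ, sub_sub_cancel]

theorem Delta_nonneg {lam : ℝ} (h₀ : 0 ≤ lam) (h₁ : lam ≤ 1) (z l : ℕ) : 0 ≤ Delta z l lam := by
  have : 0 ≤ 1 - lam := by linarith
  rw [Delta_eq_choose_mul]; positivity

theorem Delta_pos {lam : ℝ} (h₀ : 0 < lam) (h₁ : lam < 1) {z l : ℕ} (h : l ≤ z) :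
    0 < Delta z l lam := by
  have : 0 < 1 - lam := by linarith
  have : 0 < (z.choose l : ℝ) := by exact_mod_cast Nat.choose_pos h
  rw [Delta_eq_choose_mul]; positivity

theorem lam_mul_Delta (z l : ℕ) (lam : ℝ) :
    lam * (((z : ℝ) + 1) * Delta z l lam) = ((z : ℝ) + 1 - l) * Delta (z + 1) l lam := by
  rw [Delta_eq_choose_mul, Delta_eq_choose_mul]
  rcases lt_trichotomy l (z + 1) with hl | rfl | hl
  · have hchoose := congrArg (Nat.cast (R := ℝ)) (Nat.choose_mul_succ_eq z l)
    push_cast [Nat.cast_sub hl.le] at hchoose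
    rw [show z + 1 - l = z - l + 1 by omega, pow_succ]
    linear_combination (1 - lam) ^ (l + 1) * lam ^ (z - l) * lam * hchoose
  · simp
  · simp [Nat.choose_eq_zero_of_lt hl, Nat.choose_eq_zero_of_lt (Nat.lt_of_succ_lt hl)]

theorem lam_mul_Delta_pred (z l : ℕ) (lam : ℝ) :
    lam * (z * Delta (z - 1) l lam) = ((z : ℝ) - l) * Delta z l lam := by
  rcases z with _ | z
  · rcases l with _ | l <;> simp [Delta_eq_choose_mul]
  · simpa [add_sub_right_comm] using lam_mul_Delta z l lam

theorem binCDF_succ_mul_le {p : ℝ} (hp₀ : 0 ≤ p) (hp₁ : p ≤ 1) {z l : ℕ} (h : l ≤ z) :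
    ((z : ℝ) + 1 - l) * binCDF (z + 1) l p ≤ (1 - p) * ((z : ℝ) + 1) * binCDF z l p := by
  have hq : 0 ≤ 1 - p := by linarith
  rw [binCDF, binCDF, mul_sum, mul_sum]
  refine sum_le_sum fun j hj => ?_
  have hjl : j ≤ l := Nat.lt_succ_iff.mp (mem_range.mp hj)
  have hchoose := congrArg (Nat.cast (R := ℝ)) (Nat.choose_mul_succ_eq z j)
  push_cast [Nat.cast_sub (by omega : j ≤ z + 1)] at hchoose
  have hcoef : (z : ℝ) + 1 - l ≤ (z : ℝ) + 1 - j := by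
    have : (j : ℝ) ≤ l := by exact_mod_cast hjl
    linarith
  calc ((z : ℝ) + 1 - l) * ((z + 1).choose j * p ^ j * (1 - p) ^ (z + 1 - j))
      ≤ ((z : ℝ) + 1 - j) * ((z + 1).choose j * p ^ j * (1 - p) ^ (z + 1 - j)) := by
        gcongr
    _ = (1 - p) * ((z : ℝ) + 1) * (z.choose j * p ^ j * (1 - p) ^ (z - j)) := by
        rw [show z + 1 - j = z - j + 1 by omega, pow_succ]
        linear_combination (-(p ^ j * (1 - p) ^ (z - j) * (1 - p))) * hchoose

theorem Delta_mul_binCDF_succ_le {lam : ℝ} (h₀ : 0 ≤ lam) (h₁ : lam ≤ 1) {z l : ℕ} (h : l ≤ z) :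
    Delta z l lam * binCDF (z + 1) l (1 - lam) ≤ Delta (z + 1) l lam * binCDF z l (1 - lam) := by
  have hpos : (0 : ℝ) < (z : ℝ) + 1 - l := by
    have : (l : ℝ) ≤ z := by exact_mod_cast h
    linarith
  have hB := binCDF_succ_mul_le (p := 1 - lam) (by linarith) (by linarith) h
  rw [sub_sub_cancel] at hB
  refine le_of_mul_le_mul_left ?_ hpos
  calc ((z : ℝ) + 1 - l) * (Delta z l lam * binCDF (z + 1) l (1 - lam))
      = Delta z l lam * (((z : ℝ) + 1 - l) * binCDF (z + 1) l (1 - lam)) := by ring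
    _ ≤ Delta z l lam * (lam * ((z : ℝ) + 1) * binCDF z l (1 - lam)) :=
        mul_le_mul_of_nonneg_left hB (Delta_nonneg h₀ h₁ z l)
    _ = ((z : ℝ) + 1 - l) * (Delta (z + 1) l lam * binCDF z l (1 - lam)) := by
        linear_combination binCDF z l (1 - lam) * lam_mul_Delta z l lam

theorem hFun_eq (l n z : ℕ) (lam : ℝ) :
    hFun l n z lam = (((n : ℝ) - z + 1) * binCDF z l (1 - lam)
        + (z : ℝ) * binCDF (z - 1) l (1 - lam)) / ((n : ℝ) + 1) := by
  rw [hFun]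
  split_ifs with h
  · rw [binCDF_of_le _ h, binCDF_of_le _ (by omega : z - 1 ≤ l), eq_div_iff (by positivity)]
    ring
  · rfl

theorem gFun_eq (l n z : ℕ) (lam : ℝ) :
    gFun l n z lam = ((n : ℝ) - z + 1) * binCDF z l (1 - lam) / ((n : ℝ) + 1) := by
  rw [gFun]
  split_ifs with h
  · rw [binCDF_of_le _ h, mul_one]
  · rfl

theorem slopeRatio_eq (l n z : ℕ) (lam : ℝ) :
    slopeRatio l n z lam = (((n : ℝ) - z) * Delta z l lam + z * Delta (z - 1) l lam) /
      (((n : ℝ) - z) * Delta z l lam + binCDF z l (1 - lam)) := by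
  have hzDelta : (z : ℝ) * Delta (z - 1) l lam
      = z * binCDF (z - 1) l (1 - lam) - z * binCDF z l (1 - lam) := by
    rcases z with _ | z
    · simp
    · rw [Delta, Nat.add_sub_cancel]; ring
  rw [slopeRatio, hFun_eq, hFun_eq, gFun_eq, gFun_eq, div_sub_div_same, div_sub_div_same,
    div_div_div_cancel_right₀ (by positivity), hzDelta, Delta, ← neg_div_neg_eq]
  push_cast
  congr 1 <;> ring

theorem slopeRatio_sub_one {lam : ℝ} (h₀ : 0 < lam) (h₁ : lam ≤ 1) {l n z : ℕ} (hz : z ≤ n) :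
    slopeRatio l n z lam - 1
      = ((z : ℝ) * Delta (z - 1) l lam - binCDF z l (1 - lam)) /
          (((n : ℝ) - z) * Delta z l lam + binCDF z l (1 - lam)) := by
  have hnz : (0 : ℝ) ≤ n - z := sub_nonneg.mpr (by exact_mod_cast hz)
  have hden : 0 < ((n : ℝ) - z) * Delta z l lam + binCDF z l (1 - lam) :=
    add_pos_of_nonneg_of_pos (mul_nonneg hnz (Delta_nonneg h₀.le h₁ z l))
      (binCDF_pos (by linarith) (by linarith) z l)
  rw [slopeRatio_eq, div_sub_one hden.ne']
  ring_nf

theorem sub_div_lt_sub_div {lam c m d e B₁ B₂ P Q : ℝ} (h₀ : 0 < lam) (h₁ : lam < 1)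
    (hc : 0 ≤ c) (hm : 1 ≤ m) (hd : 0 ≤ d) (he : 0 < e) (hB₁ : 0 < B₁) (hB₂ : 0 < B₂)
    (hdB : d * B₂ ≤ e * B₁) (hP : lam * P = c * d) (hQ : lam * Q = (c + 1) * e) :
    (P - B₁) / (m * d + B₁) < (Q - B₂) / ((m - 1) * e + B₂) := by
  have : 0 ≤ m - 1 := sub_nonneg.mpr hm
  rw [div_lt_div_iff₀ (by positivity) (by positivity), ← mul_lt_mul_iff_right₀ h₀]
  have hsplit : lam * ((Q - B₂) * (m * d + B₁)) - lam * ((P - B₁) * ((m - 1) * e + B₂))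
      = (m + c) * (d * e) + (c + lam * m) * (e * B₁ - d * B₂) + (1 - lam) * e * B₁ := by
    linear_combination (m * d + B₁) * hQ - ((m - 1) * e + B₂) * hP
  have : 0 ≤ e * B₁ - d * B₂ := sub_nonneg.mpr hdB
  have : 0 < 1 - lam := sub_pos.mpr h₁
  have : 0 ≤ m + c := by linarith
  have : 0 < (m + c) * (d * e) + (c + lam * m) * (e * B₁ - d * B₂) + (1 - lam) * e * B₁ := by
    positivity
  linarith

theorem slopeRatio_lt_succ {lam : ℝ} (h₀ : 0 < lam) (h₁ : lam < 1) {l n z : ℕ} (hlz : l ≤ z)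
    (hzn : z + 1 ≤ n) : slopeRatio l n z lam < slopeRatio l n (z + 1) lam := by
  have hc : (0 : ℝ) ≤ z - l := sub_nonneg.mpr (by exact_mod_cast hlz)
  have hm : (1 : ℝ) ≤ n - z := le_sub_iff_add_le'.mpr (by exact_mod_cast hzn)
  have hstep := sub_div_lt_sub_div (m := (n : ℝ) - z) (Q := ((z : ℝ) + 1) * Delta z l lam)
    h₀ h₁ hc hm
    (Delta_nonneg h₀.le h₁.le z l) (Delta_pos h₀ h₁ (hlz.trans z.le_succ))
    (binCDF_pos (by linarith) (by linarith) z l) (binCDF_pos (by linarith) (by linarith) (z + 1) l)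
    (Delta_mul_binCDF_succ_le h₀.le h₁.le hlz) (lam_mul_Delta_pred z l lam)
    (by linear_combination lam_mul_Delta z l lam)
  rw [← sub_lt_sub_iff_right 1, slopeRatio_sub_one h₀ h₁.le (by omega),
    slopeRatio_sub_one h₀ h₁.le hzn, Nat.add_sub_cancel]
  convert hstep using 3 <;> push_cast <;> ring

theorem slopeRatio_strictMonoOn {lam : ℝ} (h₀ : 0 < lam) (h₁ : lam < 1) (l n : ℕ) :
    StrictMonoOn (fun z => slopeRatio l n z lam) (Set.Icc l n) :=
  strictMonoOn_of_lt_add_one Set.ordConnected_Icc fun _ _ hz hz' =>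
    slopeRatio_lt_succ h₀ h₁ hz.1 hz'.2

theorem stmt_17_general (lam : ℝ) (hlam0 : 0 < lam) (hlam1 : lam < 1)
    (l n : ℕ) :
    (∀ z : ℕ, l ≤ z → z ≤ n →
      slopeRatio l n z lam - 1
        = ((z : ℝ) * Delta (z - 1) l lam - binCDF z l (1 - lam)) /
            (((n : ℝ) - z) * Delta z l lam + binCDF z l (1 - lam))) ∧
    (∀ z₁ z₂ : ℕ, l ≤ z₁ → z₁ < z₂ → z₂ ≤ n →
      slopeRatio l n z₁ lam < slopeRatio l n z₂ lam) :=
  ⟨fun _ _ hzn => slopeRatio_sub_one hlam0 hlam1.le hzn,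
    fun _ _ hl₁ h₁₂ hn₂ => slopeRatio_strictMonoOn hlam0 hlam1 l n
      ⟨hl₁, h₁₂.le.trans hn₂⟩ ⟨hl₁.trans h₁₂.le, hn₂⟩ h₁₂⟩

theorem stmt_17 (lam : ℝ) (hlam0 : 0 < lam) (hlam1 : lam < 1)
    (l n : ℕ) (hn : l + 1 ≤ n) :
    (∀ z : ℕ, l ≤ z → z ≤ n →
      slopeRatio l n z lam - 1
        = ((z : ℝ) * Delta (z - 1) l lam - binCDF z l (1 - lam)) /
            (((n : ℝ) - z) * Delta z l lam + binCDF z l (1 - lam))) ∧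
    (∀ z₁ z₂ : ℕ, l ≤ z₁ → z₁ < z₂ → z₂ ≤ n →
      slopeRatio l n z₁ lam < slopeRatio l n z₂ lam) :=
  stmt_17_general lam hlam0 hlam1 l n
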